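/- arXiv:1708.08312 — 2 statements merged into one kernel-verified Lean document; each statement's English description precedes it below -/
import Mathlib

section
/- Let ≤ be a monomial well-order on FreeMagma E and let I be a two-sided ideal of A. Then for every f ∈ A there exists a unique g ∈ Span_ℚ(O(I)) with f − g ∈ I (the canonical form Can(f, I) of f). Moreover, for f, f' ∈ A one has Can(f, I) = Can(f', I) if and only if f − f' ∈ I, and Can(f, I) = 0 if and only if f ∈ I. -/
/-- The monomial corresponding to an element of the free magma, inside the free
non-unital non-associative algebra. -/
noncomputable def magmaMonomial {E : Type*} (z : FreeMagma E) :
    FreeNonUnitalNonAssocAlgebra ℚ E :=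
  MonoidAlgebra.single z (1 : ℚ)

/-- A ℚ-submodule of the magma algebra which is stable under left and right
multiplication by arbitrary elements: a two-sided ideal. -/
def IsTwoSidedIdealSubmodule {E : Type*}
    (I : Submodule ℚ (FreeNonUnitalNonAssocAlgebra ℚ E)) : Prop :=
  ∀ a x : FreeNonUnitalNonAssocAlgebra ℚ E, x ∈ I → a * x ∈ I ∧ x * a ∈ I

/-- The maximal term `T f` of a nonzero element `f` of the magma algebra: the largest
monomial in its support, with respect to a given linear order on the free magma. -/
noncomputable def maxTerm {E : Type*} [LinearOrder (FreeMagma E)]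
    (f : FreeNonUnitalNonAssocAlgebra ℚ E) (hf : f ≠ 0) : FreeMagma E :=
  f.coeff.support.max' (Finsupp.support_nonempty_iff.mpr (mt MonoidAlgebra.coeff_eq_zero.mp hf))

/-- `T I`: the set of maximal terms of nonzero elements of `I`. -/
def maxTermSet {E : Type*} [LinearOrder (FreeMagma E)]
    (I : Submodule ℚ (FreeNonUnitalNonAssocAlgebra ℚ E)) : Set (FreeMagma E) :=
  {z | ∃ (f : FreeNonUnitalNonAssocAlgebra ℚ E) (hf : f ≠ 0), f ∈ I ∧ maxTerm f hf = z}

/-- `O I`: the complement of `T I` in the free magma. -/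
def outTermSet {E : Type*} [LinearOrder (FreeMagma E)]
    (I : Submodule ℚ (FreeNonUnitalNonAssocAlgebra ℚ E)) : Set (FreeMagma E) :=
  (maxTermSet I)ᶜ

/-!
The subspace `I` and the span of `O(I)` are complementary. They meet trivially because a nonzero
element of `I` has its maximal term in `T(I)`, hence not in `O(I)`. They span the whole algebra
by division with remainder: the maximal term `m` of `f ≠ 0` is the maximal term either of some
`h ∈ I` (if `m ∈ T(I)`) or of the monomial `m ∈ O(I)`, and subtracting the right multiple of it
leaves an element all of whose terms are smaller than `m`; the well-order makes this terminate.
Existence, uniqueness and both characterisations of canonical forms are the direct sum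
decomposition read elementwise.
-/

open MonoidAlgebra

theorem Submodule.eq_iff_sub_mem_of_disjoint {R M : Type*} [Ring R] [AddCommGroup M]
    [Module R M] {p q : Submodule R M} (hpq : Disjoint p q) {f f' g g' : M}
    (hg : g ∈ q) (hg' : g' ∈ q) (hfg : f - g ∈ p) (hfg' : f' - g' ∈ p) : g = g' ↔ f - f' ∈ p := by
  constructor
  · rintro rfl
    simpa using p.sub_mem hfg hfg'
  · intro hff'
    have hgg' : g - g' ∈ p := by
      convert p.add_mem (p.sub_mem hfg' hfg) hff' using 1
      abel
    exact sub_eq_zero.1 (Submodule.disjoint_def.1 hpq _ hgg' (q.sub_mem hg hg'))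

section

variable {E : Type*}

theorem span_magmaMonomial_eq_supported (s : Set (FreeMagma E)) :
    Submodule.span ℚ (magmaMonomial '' s) = supported ℚ ℚ s :=
  (supported_eq_span_single (R := ℚ) s).symm

theorem magmaMonomial_ne_zero (m : FreeMagma E) : magmaMonomial m ≠ 0 := by
  simp [magmaMonomial]

variable [LinearOrder (FreeMagma E)]

theorem maxTerm_mem_support (f : FreeNonUnitalNonAssocAlgebra ℚ E) (hf : f ≠ 0) :
    maxTerm f hf ∈ f.coeff.support :=
  Finset.max'_mem _ _

theorem le_maxTerm {f : FreeNonUnitalNonAssocAlgebra ℚ E} (hf : f ≠ 0) {w : FreeMagma E}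
    (hw : w ∈ f.coeff.support) : w ≤ maxTerm f hf :=
  Finset.le_max' _ _ hw

theorem maxTerm_magmaMonomial (m : FreeMagma E) :
    maxTerm (magmaMonomial m) (magmaMonomial_ne_zero m) = m := by
  simp [maxTerm, magmaMonomial, coeff_single]

theorem lt_maxTerm_of_mem_support_sub_smul {f p : FreeNonUnitalNonAssocAlgebra ℚ E}
    (hf : f ≠ 0) (hp : p ≠ 0) (hpf : maxTerm p hp = maxTerm f hf) {w : FreeMagma E}
    (hw : w ∈ (f - (f.coeff (maxTerm f hf) / p.coeff (maxTerm f hf)) • p).coeff.support) :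
    w < maxTerm f hf := by
  set m := maxTerm f hf
  have hpm : p.coeff m ≠ 0 := Finsupp.mem_support_iff.1 (hpf ▸ maxTerm_mem_support p hp)
  have hwm : w ≠ m := by
    rintro rfl
    simp [Finsupp.mem_support_iff, coeff_sub, hpm] at hw
  refine lt_of_le_of_ne ?_ hwm
  rw [coeff_sub, coeff_smul] at hw
  rcases Finset.mem_union.1 (Finsupp.support_sub hw) with hwf | hwp
  · exact le_maxTerm hf hwf
  · exact hpf ▸ le_maxTerm hp (Finsupp.support_smul hwp)

variable (I : Submodule ℚ (FreeNonUnitalNonAssocAlgebra ℚ E))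

theorem disjoint_span_outTermSet :
    Disjoint I (Submodule.span ℚ (magmaMonomial '' outTermSet I)) := by
  rw [Submodule.disjoint_def, span_magmaMonomial_eq_supported]
  intro f hfI hfO
  by_contra hf
  exact hfO (maxTerm_mem_support f hf) ⟨f, hf, hfI, rfl⟩

theorem exists_mem_sup_span_outTermSet_maxTerm_eq (m : FreeMagma E) :
    ∃ p ∈ I ⊔ Submodule.span ℚ (magmaMonomial '' outTermSet I),
      ∃ hp : p ≠ 0, maxTerm p hp = m := by
  by_cases hm : m ∈ maxTermSet I
  · obtain ⟨p, hp, hpI, rfl⟩ := hm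
    exact ⟨p, Submodule.mem_sup_left hpI, hp, rfl⟩
  · exact ⟨magmaMonomial m, Submodule.mem_sup_right (Submodule.subset_span ⟨m, hm, rfl⟩),
      magmaMonomial_ne_zero m, maxTerm_magmaMonomial m⟩

theorem mem_sup_span_outTermSet [WellFoundedLT (FreeMagma E)]
    (f : FreeNonUnitalNonAssocAlgebra ℚ E) :
    f ∈ I ⊔ Submodule.span ℚ (magmaMonomial '' outTermSet I) := by
  set J := I ⊔ Submodule.span ℚ (magmaMonomial '' outTermSet I)
  by_cases hf : f = 0
  · exact hf ▸ J.zero_mem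
  suffices ∀ m f (hf : f ≠ 0), maxTerm f hf = m → f ∈ J from this _ f hf rfl
  intro m
  induction m using WellFoundedLT.induction with
  | _ m ih =>
  rintro f hf rfl
  obtain ⟨p, hpJ, hp, hpf⟩ := exists_mem_sup_span_outTermSet_maxTerm_eq I (maxTerm f hf)
  set c := f.coeff (maxTerm f hf) / p.coeff (maxTerm f hf)
  have hrem : f - c • p ∈ J := by
    by_cases hr : f - c • p = 0
    · exact hr ▸ J.zero_mem
    exact ih _ (lt_maxTerm_of_mem_support_sub_smul hf hp hpf (maxTerm_mem_support _ hr)) _ hr rfl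
  simpa using J.add_mem hrem (J.smul_mem c hpJ)

theorem isCompl_span_outTermSet [WellFoundedLT (FreeMagma E)] :
    IsCompl I (Submodule.span ℚ (magmaMonomial '' outTermSet I)) :=
  ⟨disjoint_span_outTermSet I,
    codisjoint_iff.2 (eq_top_iff.2 fun f _ ↦ mem_sup_span_outTermSet I f)⟩

end

theorem canonical_form_exists_unique_general (E : Type*) [LinearOrder (FreeMagma E)]
    (hwell : ∀ S : Set (FreeMagma E), S.Nonempty → ∃ m ∈ S, ∀ x ∈ S, m ≤ x)
    (I : Submodule ℚ (FreeNonUnitalNonAssocAlgebra ℚ E)) :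
    (∀ f : FreeNonUnitalNonAssocAlgebra ℚ E,
      ∃! g : FreeNonUnitalNonAssocAlgebra ℚ E,
        g ∈ Submodule.span ℚ (magmaMonomial '' outTermSet I) ∧ f - g ∈ I) ∧
    (∀ f f' g g' : FreeNonUnitalNonAssocAlgebra ℚ E,
      g ∈ Submodule.span ℚ (magmaMonomial '' outTermSet I) → f - g ∈ I →
      g' ∈ Submodule.span ℚ (magmaMonomial '' outTermSet I) → f' - g' ∈ I →
      (g = g' ↔ f - f' ∈ I)) ∧
    (∀ f g : FreeNonUnitalNonAssocAlgebra ℚ E,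
      g ∈ Submodule.span ℚ (magmaMonomial '' outTermSet I) → f - g ∈ I →
      (g = 0 ↔ f ∈ I)) := by
  have : WellFoundedLT (FreeMagma E) := ⟨WellFounded.wellFounded_iff_has_min.2 fun s hs ↦
    let ⟨m, hm, hmin⟩ := hwell s hs; ⟨m, hm, fun x hx ↦ not_lt.2 (hmin x hx)⟩⟩
  have hcompl := isCompl_span_outTermSet I
  refine ⟨fun f ↦ ?_, fun _ _ _ _ hg hfg hg' hfg' ↦
    Submodule.eq_iff_sub_mem_of_disjoint hcompl.disjoint hg hg' hfg hfg', fun f g hg hfg ↦ ?_⟩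
  · obtain ⟨y, g, hy, hg, rfl⟩ := Submodule.codisjoint_iff_exists_add_eq.1 hcompl.codisjoint f
    have hyg : y + g - g ∈ I := by simpa using hy
    refine ⟨g, ⟨hg, hyg⟩, fun g' ⟨hg', hyg'⟩ ↦ ?_⟩
    exact (Submodule.eq_iff_sub_mem_of_disjoint hcompl.disjoint hg' hg hyg' hyg).2 (by simp)
  · simpa using Submodule.eq_iff_sub_mem_of_disjoint hcompl.disjoint hg (zero_mem _) hfg
      (f' := 0) (by simp)

/-- Canonical forms: for a monomial well-order on the free magma and a two-sided ideal
`I` of the magma algebra, every `f` has a unique canonical form `g ∈ Span(O(I))` with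
`f - g ∈ I`; two elements have the same canonical form iff they differ by an element
of `I`, and the canonical form vanishes iff `f ∈ I`. -/
theorem canonical_form_exists_unique (E : Type*) [LinearOrder (FreeMagma E)]
    (hmono : ∀ x y z : FreeMagma E, x < y → x * z < y * z ∧ z * x < z * y)
    (hwell : ∀ S : Set (FreeMagma E), S.Nonempty → ∃ m ∈ S, ∀ x ∈ S, m ≤ x)
    (I : Submodule ℚ (FreeNonUnitalNonAssocAlgebra ℚ E))
    (hI : IsTwoSidedIdealSubmodule I) :
    (∀ f : FreeNonUnitalNonAssocAlgebra ℚ E,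
      ∃! g : FreeNonUnitalNonAssocAlgebra ℚ E,
        g ∈ Submodule.span ℚ (magmaMonomial '' outTermSet I) ∧ f - g ∈ I) ∧
    (∀ f f' g g' : FreeNonUnitalNonAssocAlgebra ℚ E,
      g ∈ Submodule.span ℚ (magmaMonomial '' outTermSet I) → f - g ∈ I →
      g' ∈ Submodule.span ℚ (magmaMonomial '' outTermSet I) → f' - g' ∈ I →
      (g = g' ↔ f - f' ∈ I)) ∧
    (∀ f g : FreeNonUnitalNonAssocAlgebra ℚ E,
      g ∈ Submodule.span ℚ (magmaMonomial '' outTermSet I) → f - g ∈ I →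
      (g = 0 ↔ f ∈ I)) :=
  canonical_form_exists_unique_general E hwell I
end

section
/- Let J be the two-sided ideal of A generated by the pre-Lie associator elements x·(y·z) − (x·y)·z − y·(x·z) + (y·x)·z for x, y, z ∈ A. Then every monomial σ ∈ FreeMagma E that does not have nondecreasing branches belongs to T(J), where T(J) is taken with respect to the order ≼. -/
/-! If a branch of `σ = x * y` fails to have nondecreasing branches, induction applies: multiplying
by a monomial is strictly `≺`-monotone, so `T(J)` is stable under left and right multiplication
by monomials. Otherwise `σ = x * (u * v)` with `u ≺ x`, and `σ` is the leading term of the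
pre-Lie associator of `x, u, v`: the monomials `(x * u) * v` and `(u * x) * v` have fewer
branches, and `u * (x * v)` has a smaller first branch. -/

/-- The additive extension of the degree function `d : E → ℕ` to the free magma. -/
def FreeMagma.mdeg {E : Type*} (d : E → ℕ) : FreeMagma E → ℕ
  | .of a => d a
  | .mul x y => FreeMagma.mdeg d x + FreeMagma.mdeg d y

/-- The number of branches: `b a = 0` on generators and `b (x·y) = b y + 1`. -/
def FreeMagma.nbranch {E : Type*} : FreeMagma E → ℕ
  | .of _ => 0
  | .mul _ y => FreeMagma.nbranch y + 1

/-- The list of branches: `ℓ a = []` and `ℓ (x·y) = x :: ℓ y`. -/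
def FreeMagma.branchList {E : Type*} : FreeMagma E → List (FreeMagma E)
  | .of _ => []
  | .mul x y => x :: FreeMagma.branchList y

/-- The root: `r a = a` and `r (x·y) = r y`. -/
def FreeMagma.rootOf {E : Type*} : FreeMagma E → E
  | .of a => a
  | .mul _ y => FreeMagma.rootOf y

/-- The strict order `≺` on the free magma (planar `E`-decorated rooted trees):
compare by degree, then by number of branches, then lexicographically on the list of
branches, then by the root decoration. -/
inductive MagmaLt {E : Type*} [LT E] (d : E → ℕ) : FreeMagma E → FreeMagma E → Prop
  | deg {σ τ : FreeMagma E} : FreeMagma.mdeg d σ < FreeMagma.mdeg d τ → MagmaLt d σ τ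
  | branches {σ τ : FreeMagma E} : FreeMagma.mdeg d σ = FreeMagma.mdeg d τ →
      FreeMagma.nbranch σ < FreeMagma.nbranch τ → MagmaLt d σ τ
  | lex {σ τ : FreeMagma E} : FreeMagma.mdeg d σ = FreeMagma.mdeg d τ →
      FreeMagma.nbranch σ = FreeMagma.nbranch τ →
      List.Lex (MagmaLt d) (FreeMagma.branchList σ) (FreeMagma.branchList τ) → MagmaLt d σ τ
  | root {σ τ : FreeMagma E} : FreeMagma.mdeg d σ = FreeMagma.mdeg d τ →
      FreeMagma.nbranch σ = FreeMagma.nbranch τ →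
      FreeMagma.branchList σ = FreeMagma.branchList τ →
      FreeMagma.rootOf σ < FreeMagma.rootOf τ → MagmaLt d σ τ

/-- The smallest two-sided ideal (ℚ-submodule closed under left and right multiplication)
containing a given set. -/
noncomputable def twoSidedIdealGen {E : Type*} (S : Set (FreeNonUnitalNonAssocAlgebra ℚ E)) :
    Submodule ℚ (FreeNonUnitalNonAssocAlgebra ℚ E) :=
  sInf {I | IsTwoSidedIdealSubmodule I ∧ S ⊆ I}

/-- `z` is the `≼`-maximal term of `f`: it lies in the support of `f` and strictly
dominates every other monomial of the support. -/
def IsMaxTermWrt {E : Type*} [LT E] (d : E → ℕ)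
    (f : FreeNonUnitalNonAssocAlgebra ℚ E) (z : FreeMagma E) : Prop :=
  z ∈ f.coeff.support ∧ ∀ w ∈ f.coeff.support, w ≠ z → MagmaLt d w z

/-- `T(I)` with respect to the order `≼`: the set of maximal terms of (nonzero)
elements of `I`. -/
def maxTermSetWrt {E : Type*} [LT E] (d : E → ℕ)
    (I : Submodule ℚ (FreeNonUnitalNonAssocAlgebra ℚ E)) : Set (FreeMagma E) :=
  {z | ∃ f ∈ I, IsMaxTermWrt d f z}

/-- The set of pre-Lie associator elements `x·(y·z) − (x·y)·z − y·(x·z) + (y·x)·z`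
for `x, y, z` in the magma algebra. -/
def preLieAssocSet (E : Type*) : Set (FreeNonUnitalNonAssocAlgebra ℚ E) :=
  {w | ∃ x y z : FreeNonUnitalNonAssocAlgebra ℚ E,
    w = x * (y * z) - (x * y) * z - y * (x * z) + (y * x) * z}

/-- A monomial has nondecreasing branches if at every vertex the branches are displayed
in `≼`-nondecreasing order from left to right. -/
def HasNondecreasingBranches {E : Type*} [LT E] (d : E → ℕ) : FreeMagma E → Prop
  | .of _ => True
  | .mul x y => HasNondecreasingBranches d x ∧ HasNondecreasingBranches d y ∧
      ∀ u v : FreeMagma E, y = u * v → (MagmaLt d x u ∨ x = u)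


namespace FreeMagma

variable {E : Type*}

@[simp] lemma mdeg_mul (d : E → ℕ) (x y : FreeMagma E) : mdeg d (x * y) = mdeg d x + mdeg d y :=
  rfl

@[simp] lemma nbranch_mul (x y : FreeMagma E) : nbranch (x * y) = nbranch y + 1 := rfl

@[simp] lemma branchList_mul (x y : FreeMagma E) : branchList (x * y) = x :: branchList y := rfl

@[simp] lemma rootOf_mul (x y : FreeMagma E) : rootOf (x * y) = rootOf y := rfl

lemma mul_inj {x y x' y' : FreeMagma E} : x * y = x' * y' ↔ x = x' ∧ y = y' :=
  ⟨fun h => by injection h with h₁ h₂; exact ⟨h₁, h₂⟩,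
    by rintro ⟨rfl, rfl⟩; rfl⟩

instance : IsCancelMul (FreeMagma E) where
  mul_left_cancel _ _ _ h := (mul_inj.mp h).2
  mul_right_cancel _ _ _ h := (mul_inj.mp h).1

lemma eq_of_branchList_eq_of_rootOf_eq :
    ∀ {σ τ : FreeMagma E}, σ.branchList = τ.branchList → σ.rootOf = τ.rootOf → σ = τ
  | .of _, .of _, _, hr => congrArg of hr
  | .mul x y, .mul x' y', hl, hr => by
      simp only [branchList, List.cons.injEq] at hl
      obtain ⟨rfl, hl⟩ := hl
      exact congrArg (x * ·) (eq_of_branchList_eq_of_rootOf_eq hl hr)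

end FreeMagma

open FreeMagma

section Order

variable {E : Type*} {d : E → ℕ}

lemma MagmaLt.mdeg_le [LT E] {σ τ : FreeMagma E} (h : MagmaLt d σ τ) :
    mdeg d σ ≤ mdeg d τ := by
  cases h with
  | deg h => exact h.le
  | branches h _ | lex h _ _ | root h _ _ _ => exact h.le

lemma MagmaLt.mul_left [LT E] {σ τ : FreeMagma E} (μ : FreeMagma E) (h : MagmaLt d σ τ) :
    MagmaLt d (μ * σ) (μ * τ) := by
  cases h with
  | deg h => exact .deg (by simpa using h)
  | branches h hb => exact .branches (by simp [h]) (by simpa using hb)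
  | lex h hb hl => exact .lex (by simp [h]) (by simp [hb]) (by simpa using hl.cons)
  | root h hb hl hr => exact .root (by simp [h]) (by simp [hb]) (by simp [hl]) (by simpa using hr)

lemma MagmaLt.mul_right [LT E] {σ τ : FreeMagma E} (μ : FreeMagma E) (h : MagmaLt d σ τ) :
    MagmaLt d (σ * μ) (τ * μ) := by
  rcases h.mdeg_le.lt_or_eq with hd | hd
  · exact .deg (by simpa using hd)
  · exact .lex (by simp [hd]) rfl (by simpa using List.Lex.rel h)

variable [LinearOrder E]

lemma magmaLt_trichotomous_of_branchList {σ τ : FreeMagma E}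
    (h : List.Lex (MagmaLt d) σ.branchList τ.branchList ∨ σ.branchList = τ.branchList ∨
      List.Lex (MagmaLt d) τ.branchList σ.branchList) :
    MagmaLt d σ τ ∨ σ = τ ∨ MagmaLt d τ σ := by
  rcases lt_trichotomy (mdeg d σ) (mdeg d τ) with hd | hd | hd
  · exact .inl (.deg hd)
  swap
  · exact .inr (.inr (.deg hd))
  rcases lt_trichotomy σ.nbranch τ.nbranch with hb | hb | hb
  · exact .inl (.branches hd hb)
  swap
  · exact .inr (.inr (.branches hd.symm hb))
  rcases h with hl | hl | hl
  · exact .inl (.lex hd hb hl)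
  swap
  · exact .inr (.inr (.lex hd.symm hb.symm hl))
  rcases lt_trichotomy σ.rootOf τ.rootOf with hr | hr | hr
  · exact .inl (.root hd hb hl hr)
  · exact .inr (.inl (eq_of_branchList_eq_of_rootOf_eq hl hr))
  · exact .inr (.inr (.root hd.symm hb.symm hl.symm hr))

lemma branchList_lex_trichotomous :
    ∀ σ τ : FreeMagma E, List.Lex (MagmaLt d) σ.branchList τ.branchList ∨
      σ.branchList = τ.branchList ∨ List.Lex (MagmaLt d) τ.branchList σ.branchList
  | .of _, .of _ => .inr (.inl rfl)
  | .of _, .mul _ _ => .inl .nil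
  | .mul _ _, .of _ => .inr (.inr .nil)
  | .mul x y, .mul x' y' => by
      rcases magmaLt_trichotomous_of_branchList (branchList_lex_trichotomous x x') with
        hx | rfl | hx
      · exact .inl (.rel hx)
      · rcases branchList_lex_trichotomous y y' with hy | hy | hy
        · exact .inl (.cons hy)
        · exact .inr (.inl (congrArg (x :: ·) hy))
        · exact .inr (.inr (.cons hy))
      · exact .inr (.inr (.rel hx))

instance : Std.Trichotomous (MagmaLt (E := E) d) :=
  ⟨fun σ τ h₁ h₂ =>
    ((magmaLt_trichotomous_of_branchList (branchList_lex_trichotomous σ τ)).resolve_left h₁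
      ).resolve_right h₂⟩

end Order

section Algebra

variable {E : Type*}

lemma magmaMonomial_mul_magmaMonomial (a b : FreeMagma E) :
    magmaMonomial a * magmaMonomial b = magmaMonomial (a * b) := by
  simp [magmaMonomial, MonoidAlgebra.single_mul_single]

lemma isTwoSidedIdealSubmodule_twoSidedIdealGen (S : Set (FreeNonUnitalNonAssocAlgebra ℚ E)) :
    IsTwoSidedIdealSubmodule (twoSidedIdealGen S) := by
  intro a x hx
  simp only [twoSidedIdealGen, Submodule.mem_sInf] at hx ⊢
  exact ⟨fun I hI => (hI.1 a x (hx I hI)).1, fun I hI => (hI.1 a x (hx I hI)).2⟩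

lemma subset_twoSidedIdealGen (S : Set (FreeNonUnitalNonAssocAlgebra ℚ E)) :
    S ⊆ twoSidedIdealGen S := fun _ hs =>
  Submodule.mem_sInf.mpr fun _ hI => hI.2 hs

variable [LT E] {d : E → ℕ}

lemma IsMaxTermWrt.of_coeff_of_support {f F : FreeNonUnitalNonAssocAlgebra ℚ E} {τ : FreeMagma E}
    {g : FreeMagma E → FreeMagma E} (hf : IsMaxTermWrt d f τ)
    (hg : ∀ {a b}, MagmaLt d a b → MagmaLt d (g a) (g b)) (hcoeff : F.coeff (g τ) = f.coeff τ)
    (hsupp : ∀ w ∈ F.coeff.support, ∃ a ∈ f.coeff.support, g a = w) :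
    IsMaxTermWrt d F (g τ) := by
  refine ⟨by simpa [hcoeff] using hf.1, fun w hw hne => ?_⟩
  obtain ⟨a, ha, rfl⟩ := hsupp w hw
  exact hg (hf.2 a ha fun h => hne (congrArg g h))

lemma IsMaxTermWrt.magmaMonomial_mul {f : FreeNonUnitalNonAssocAlgebra ℚ E} {τ : FreeMagma E}
    (hf : IsMaxTermWrt d f τ) (μ : FreeMagma E) :
    IsMaxTermWrt d (magmaMonomial μ * f) (μ * τ) := by
  classical
  refine hf.of_coeff_of_support (MagmaLt.mul_left μ) ?_ fun w hw => ?_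
  · rw [magmaMonomial, MonoidAlgebra.coeff_single_mul_eq_mul_coeff τ fun _ _ => mul_right_inj μ,
      one_mul]
  · simpa using MonoidAlgebra.support_coeff_single_mul_subset f 1 μ hw

lemma IsMaxTermWrt.mul_magmaMonomial {f : FreeNonUnitalNonAssocAlgebra ℚ E} {τ : FreeMagma E}
    (hf : IsMaxTermWrt d f τ) (μ : FreeMagma E) :
    IsMaxTermWrt d (f * magmaMonomial μ) (τ * μ) := by
  classical
  refine hf.of_coeff_of_support (MagmaLt.mul_right μ) ?_ fun w hw => ?_
  · rw [magmaMonomial, MonoidAlgebra.coeff_mul_single_eq_coeff_mul τ fun _ _ => mul_left_inj μ,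
      mul_one]
  · simpa using MonoidAlgebra.support_coeff_mul_single_subset f 1 μ hw

lemma isMaxTermWrt_magmaMonomial_add {A : FreeMagma E} {g : FreeNonUnitalNonAssocAlgebra ℚ E}
    (hg : ∀ w ∈ g.coeff.support, w ≠ A ∧ MagmaLt d w A) :
    IsMaxTermWrt d (magmaMonomial A + g) A := by
  have hgA : g.coeff A = 0 := Finsupp.notMem_support_iff.mp fun hA => (hg A hA).1 rfl
  refine ⟨by simp [magmaMonomial, MonoidAlgebra.coeff_add, hgA], fun w hw hne => ?_⟩
  have hgw : g.coeff w ≠ 0 := by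
    simpa [magmaMonomial, MonoidAlgebra.coeff_add, Finsupp.single_apply, Ne.symm hne] using hw
  exact (hg w (Finsupp.mem_support_iff.mpr hgw)).2

end Algebra

section Ideal

variable {E : Type*} [LT E] {d : E → ℕ} {I : Submodule ℚ (FreeNonUnitalNonAssocAlgebra ℚ E)}
  {σ : FreeMagma E}

lemma mul_mem_maxTermSetWrt_left (hI : IsTwoSidedIdealSubmodule I) (μ : FreeMagma E)
    (hσ : σ ∈ maxTermSetWrt d I) : μ * σ ∈ maxTermSetWrt d I :=
  let ⟨f, hfI, hf⟩ := hσ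
  ⟨_, (hI _ f hfI).1, hf.magmaMonomial_mul μ⟩

lemma mul_mem_maxTermSetWrt_right (hI : IsTwoSidedIdealSubmodule I) (μ : FreeMagma E)
    (hσ : σ ∈ maxTermSetWrt d I) : σ * μ ∈ maxTermSetWrt d I :=
  let ⟨f, hfI, hf⟩ := hσ
  ⟨_, (hI _ f hfI).2, hf.mul_magmaMonomial μ⟩

lemma mul_mul_mem_maxTermSetWrt_preLie {x u : FreeMagma E} (v : FreeMagma E) (hne : x ≠ u)
    (hux : MagmaLt d u x) :
    x * (u * v) ∈ maxTermSetWrt d (twoSidedIdealGen (preLieAssocSet E)) := by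
  set m : FreeMagma E → FreeNonUnitalNonAssocAlgebra ℚ E := magmaMonomial
  refine ⟨m x * (m u * m v) - m x * m u * m v - m u * (m x * m v) + m u * m x * m v,
    subset_twoSidedIdealGen _ ⟨_, _, _, rfl⟩, ?_⟩
  have hsplit : m x * (m u * m v) - m x * m u * m v - m u * (m x * m v) + m u * m x * m v =
      m (x * (u * v)) + (m (u * x * v) - m (x * u * v) - m (u * (x * v))) := by
    simp only [m, magmaMonomial_mul_magmaMonomial]
    abel
  rw [hsplit]
  refine isMaxTermWrt_magmaMonomial_add fun w hw => ?_
  have hw' : w = u * x * v ∨ w = x * u * v ∨ w = u * (x * v) := by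
    by_contra! h
    simp [m, magmaMonomial, MonoidAlgebra.coeff_sub, Ne.symm h.1,
      Ne.symm h.2.1, Ne.symm h.2.2] at hw
  rcases hw' with rfl | rfl | rfl
  · exact ⟨ne_of_apply_ne nbranch (by simp), .branches (by simp; omega) (by simp)⟩
  · exact ⟨ne_of_apply_ne nbranch (by simp), .branches (by simp; omega) (by simp)⟩
  · exact ⟨fun h => hne (mul_inj.mp h).1.symm,
      .lex (by simp; omega) (by simp) (by simpa using List.Lex.rel hux)⟩

end Ideal

theorem not_nondecreasing_mem_maxTermSet_preLie_ideal_general (E : Type*) [LinearOrder E]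
    (d : E → ℕ) :
    ∀ σ : FreeMagma E, ¬ HasNondecreasingBranches d σ →
      σ ∈ maxTermSetWrt d (twoSidedIdealGen (preLieAssocSet E)) := by
  have hJ := isTwoSidedIdealSubmodule_twoSidedIdealGen (preLieAssocSet E)
  intro σ
  induction σ with
  | ih1 => exact fun h => (h trivial).elim
  | ih2 x y ihx ihy =>
    intro hxy
    by_cases hx : HasNondecreasingBranches d x
    swap
    · exact mul_mem_maxTermSetWrt_right hJ y (ihx hx)
    by_cases hy : HasNondecreasingBranches d y
    swap
    · exact mul_mem_maxTermSetWrt_left hJ x (ihy hy)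
    obtain ⟨u, v, rfl, hxu, hne⟩ : ∃ u v, y = u * v ∧ ¬ MagmaLt d x u ∧ x ≠ u := by
      simpa [HasNondecreasingBranches, hx, hy] using hxy
    have hux : MagmaLt d u x :=
      ((trichotomous_of (MagmaLt d) x u).resolve_left hxu).resolve_left hne
    exact mul_mul_mem_maxTermSetWrt_preLie v hne hux

/-- Every monomial which does not have nondecreasing branches is the maximal term of an
element of the ideal `J` generated by the pre-Lie associators. -/
theorem not_nondecreasing_mem_maxTermSet_preLie_ideal (E : Type*) [LinearOrder E]
    (hwo : WellFoundedLT E) (d : E → ℕ) (hd : ∀ a : E, 1 ≤ d a)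
    (hfib : ∀ n : ℕ, {a : E | d a = n}.Finite)
    (href : ∀ a b : E, d a < d b → a < b) :
    ∀ σ : FreeMagma E, ¬ HasNondecreasingBranches d σ →
      σ ∈ maxTermSetWrt d (twoSidedIdealGen (preLieAssocSet E)) :=
  not_nondecreasing_mem_maxTermSet_preLie_ideal_general E d
end
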